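/- arXiv:gr-qc/0406082 — 9 statements merged into one kernel-verified Lean document; each statement's English description precedes it below -/
import Mathlib

section
/- Let V be a 4-dimensional real vector space with a Lorentz metric, and let F and G be simple bivectors on V such that F + λG is simple for every real λ. Then the blades of F and G intersect nontrivially; equivalently, there exists a nonzero vector k with F_{ab}k^b = G_{ab}k^b = 0 (when F and G are linearly independent and nonzero). -/
open scoped BigOperators
open Matrix

/-- A bivector is *simple* if it is the exterior product of two (co)vectors. -/
def IsSimpleBivector (F : Matrix (Fin 4) (Fin 4) ℝ) : Prop :=
  ∃ r s : Fin 4 → ℝ, ∀ a b, F a b = r a * s b - r b * s a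

/-- A metric has Lorentz signature if it is congruent to diag(1,1,1,-1). -/
def IsLorentzMetric (g : Matrix (Fin 4) (Fin 4) ℝ) : Prop :=
  (∀ a b, g a b = g b a) ∧
  ∃ P : Matrix (Fin 4) (Fin 4) ℝ, IsUnit P.det ∧
    Pᵀ * g * P = Matrix.diagonal ![1, 1, 1, -1]


private theorem det_fin_four' (A : Matrix (Fin 4) (Fin 4) ℝ) : A.det =
    A 0 0 * (A 1 1 * (A 2 2 * A 3 3 - A 2 3 * A 3 2) - A 1 2 * (A 2 1 * A 3 3 - A 2 3 * A 3 1) + A 1 3 * (A 2 1 * A 3 2 - A 2 2 * A 3 1))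
  - A 0 1 * (A 1 0 * (A 2 2 * A 3 3 - A 2 3 * A 3 2) - A 1 2 * (A 2 0 * A 3 3 - A 2 3 * A 3 0) + A 1 3 * (A 2 0 * A 3 2 - A 2 2 * A 3 0))
  + A 0 2 * (A 1 0 * (A 2 1 * A 3 3 - A 2 3 * A 3 1) - A 1 1 * (A 2 0 * A 3 3 - A 2 3 * A 3 0) + A 1 3 * (A 2 0 * A 3 1 - A 2 1 * A 3 0))
  - A 0 3 * (A 1 0 * (A 2 1 * A 3 2 - A 2 2 * A 3 1) - A 1 1 * (A 2 0 * A 3 2 - A 2 2 * A 3 0) + A 1 2 * (A 2 0 * A 3 1 - A 2 1 * A 3 0)) := by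
  simp only [Matrix.det_succ_row_zero, ← Nat.not_even_iff_odd, Matrix.submatrix_apply,
    Fin.succ_zero_eq_one, Matrix.submatrix_submatrix, Matrix.det_unique, Fin.default_eq_zero,
    Function.comp_apply, Fin.succ_one_eq_two, Fin.sum_univ_succ, Fin.val_zero, Fin.zero_succAbove,
    Finset.univ_unique, Fin.val_succ, Fin.val_eq_zero, Fin.succ_succAbove_zero,
    Finset.sum_singleton, Fin.succ_succAbove_one, Even.add_self,
    show (Fin.succ 2 : Fin 4) = 3 from rfl,
    show ((2:Fin 4).succAbove 2) = 3 from rfl,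
    show ((1:Fin 4).succAbove 2) = 3 from rfl,
    show (Fin.castSucc (2:Fin 3) : Fin 4) = 2 from rfl,
    show ((3:Fin 4).succAbove 2) = 2 from rfl]
  norm_num
  ring

/-- if `F`, `G` and every combination `F + λG` are simple bivectors,
with `F`, `G` nonzero and linearly independent, then their blades intersect
nontrivially: some nonzero vector `k` is annihilated by both. -/
theorem blades_intersect_of_pencil_simple
    (g : Matrix (Fin 4) (Fin 4) ℝ) (hg : IsLorentzMetric g)
    (F G : Matrix (Fin 4) (Fin 4) ℝ)
    (hFa : ∀ a b, F a b = - F b a) (hGa : ∀ a b, G a b = - G b a)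
    (hF : IsSimpleBivector F) (hG : IsSimpleBivector G)
    (hpencil : ∀ lam : ℝ, IsSimpleBivector (F + lam • G))
    (hF0 : F ≠ 0) (hG0 : G ≠ 0) (hind : LinearIndependent ℝ ![F, G]) :
    ∃ k : Fin 4 → ℝ, k ≠ 0 ∧
      (∀ a, ∑ b, F a b * k b = 0) ∧ (∀ a, ∑ b, G a b * k b = 0) := by
  obtain ⟨r, s, hrs⟩ := hF
  obtain ⟨p, q, hpq⟩ := hG
  obtain ⟨u, v, huv⟩ := hpencil 1
  have key : ∀ a b, (r a * s b - r b * s a) + (p a * q b - p b * q a)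
      = u a * v b - u b * v a := by
    intro a b
    have h := huv a b
    simp only [Matrix.add_apply, Matrix.smul_apply, one_smul, smul_eq_mul] at h
    rw [hrs a b, hpq a b] at h
    linarith
  set M : Matrix (Fin 4) (Fin 4) ℝ := Matrix.of ![r, s, p, q] with hM
  have hdet : M.det = 0 := by
    rw [det_fin_four']
    simp only [hM, Matrix.of_apply, Matrix.cons_val', Matrix.cons_val_zero,
      Matrix.cons_val_one, Matrix.head_cons, Matrix.empty_val',
      Matrix.cons_val_fin_one, Matrix.head_fin_const, Matrix.cons_val_two,
      Matrix.tail_cons, Matrix.cons_val_three, Matrix.head_fin_const]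
    linear_combination
      (r 2 * s 3 - r 3 * s 2 + p 2 * q 3 - p 3 * q 2) * key 0 1
      + (u 0 * v 1 - u 1 * v 0) * key 2 3
      - (r 1 * s 3 - r 3 * s 1 + p 1 * q 3 - p 3 * q 1) * key 0 2
      - (u 0 * v 2 - u 2 * v 0) * key 1 3
      + (r 1 * s 2 - r 2 * s 1 + p 1 * q 2 - p 2 * q 1) * key 0 3
      + (u 0 * v 3 - u 3 * v 0) * key 1 2
  obtain ⟨k, hk0, hk⟩ := Matrix.exists_mulVec_eq_zero_iff.mpr hdet
  have hdot : ∀ i, ∑ b, (![r, s, p, q] i) b * k b = 0 := by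
    intro i
    have := congrFun hk i
    simpa [Matrix.mulVec, dotProduct, hM] using this
  have hr : ∑ b, r b * k b = 0 := hdot 0
  have hs : ∑ b, s b * k b = 0 := hdot 1
  have hp : ∑ b, p b * k b = 0 := hdot 2
  have hq : ∑ b, q b * k b = 0 := hdot 3
  refine ⟨k, hk0, ?_, ?_⟩
  · intro a
    have : ∑ b, F a b * k b
        = r a * (∑ b, s b * k b) - s a * (∑ b, r b * k b) := by
      rw [Finset.mul_sum, Finset.mul_sum, ← Finset.sum_sub_distrib]
      exact Finset.sum_congr rfl fun b _ => by rw [hrs]; ring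
    rw [this, hr, hs]; ring
  · intro a
    have : ∑ b, G a b * k b
        = p a * (∑ b, q b * k b) - q a * (∑ b, p b * k b) := by
      rw [Finset.mul_sum, Finset.mul_sum, ← Finset.sum_sub_distrib]
      exact Finset.sum_congr rfl fun b _ => by rw [hpq]; ring
    rw [this, hp, hq]; ring
end

section
/- Let V be a 4-dimensional real vector space with a Lorentz metric, and let W be a linear subspace of the space of bivectors on V such that every element of W is simple. Then dim W ≤ 3. -/
open scoped BigOperators
open Matrix

/-- The span of the union of the blades of the members of a space `W` of bivectors
(for a simple bivector the blade is the range of the associated linear map; for a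
non-simple bivector the range is the span of its two blades). -/
def bladeSpan (W : Submodule ℝ (Matrix (Fin 4) (Fin 4) ℝ)) :
    Submodule ℝ (Fin 4 → ℝ) :=
  ⨆ F : W, LinearMap.range (Matrix.mulVecLin (F : Matrix (Fin 4) (Fin 4) ℝ))

/-- The Pfaffian of a simple bivector vanishes. -/
lemma pfaffian_eq_zero_of_simple (F : Matrix (Fin 4) (Fin 4) ℝ)
    (h : IsSimpleBivector F) :
    F 0 1 * F 2 3 - F 0 2 * F 1 3 + F 0 3 * F 1 2 = 0 := by
  obtain ⟨r, s, hrs⟩ := h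
  simp only [hrs]
  ring

/-- a subspace of bivectors all of whose members are simple has
dimension at most 3. -/
theorem dim_le_three_of_all_simple
    (g : Matrix (Fin 4) (Fin 4) ℝ) (hg : IsLorentzMetric g)
    (W : Submodule ℝ (Matrix (Fin 4) (Fin 4) ℝ))
    (hanti : ∀ F ∈ W, ∀ a b, F a b = - F b a)
    (hsimple : ∀ F ∈ W, IsSimpleBivector F) :
    Module.finrank ℝ W ≤ 3 := by
  by_contra h
  push_neg at h
  -- project onto the "positive" coordinates of the Pfaffian quadratic form
  let ψ : W →ₗ[ℝ] (Fin 3 → ℝ) :=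
    { toFun := fun F => ![F.1 0 1 + F.1 2 3, F.1 0 2 - F.1 1 3, F.1 0 3 + F.1 1 2]
      map_add' := by
        intro x y
        funext i
        fin_cases i <;>
          simp [Matrix.add_apply] <;> ring
      map_smul' := by
        intro c x
        funext i
        fin_cases i <;>
          simp [Matrix.smul_apply, smul_eq_mul] <;> ring }
  have hker : LinearMap.ker ψ ≠ ⊥ := by
    intro hk
    have hinj := LinearMap.ker_eq_bot.mp hk
    have := LinearMap.finrank_le_finrank_of_injective hinj
    rw [Module.finrank_fin_fun] at this
    omega
  obtain ⟨x, hxker, hx0⟩ := Submodule.exists_mem_ne_zero_of_ne_bot hker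
  have hψx : ψ x = 0 := hxker
  set F : Matrix (Fin 4) (Fin 4) ℝ := x.1 with hF
  have hFW : F ∈ W := x.2
  have e1 : F 0 1 + F 2 3 = 0 := congrFun hψx 0
  have e2 : F 0 2 - F 1 3 = 0 := congrFun hψx 1
  have e3 : F 0 3 + F 1 2 = 0 := congrFun hψx 2
  have hPf := pfaffian_eq_zero_of_simple F (hsimple F hFW)
  have k1 : F 2 3 = -F 0 1 := by linarith
  have k2 : F 1 3 = F 0 2 := by linarith
  have k3 : F 1 2 = -F 0 3 := by linarith
  rw [k1, k2, k3] at hPf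
  have h01 : F 0 1 = 0 := by nlinarith [sq_nonneg (F 0 1), sq_nonneg (F 0 2), sq_nonneg (F 0 3)]
  have h02 : F 0 2 = 0 := by nlinarith [sq_nonneg (F 0 1), sq_nonneg (F 0 2), sq_nonneg (F 0 3)]
  have h03 : F 0 3 = 0 := by nlinarith [sq_nonneg (F 0 1), sq_nonneg (F 0 2), sq_nonneg (F 0 3)]
  have h23 : F 2 3 = 0 := by linarith
  have h13 : F 1 3 = 0 := by linarith
  have h12 : F 1 2 = 0 := by linarith
  have ha := hanti F hFW
  have h00 : F 0 0 = 0 := by have := ha 0 0; linarith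
  have h11 : F 1 1 = 0 := by have := ha 1 1; linarith
  have h22 : F 2 2 = 0 := by have := ha 2 2; linarith
  have h33 : F 3 3 = 0 := by have := ha 3 3; linarith
  have h10 : F 1 0 = 0 := by have := ha 1 0; linarith
  have h20 : F 2 0 = 0 := by have := ha 2 0; linarith
  have h30 : F 3 0 = 0 := by have := ha 3 0; linarith
  have h21 : F 2 1 = 0 := by have := ha 2 1; linarith
  have h31 : F 3 1 = 0 := by have := ha 3 1; linarith
  have h32 : F 3 2 = 0 := by have := ha 3 2; linarith
  apply hx0
  apply Subtype.ext
  show F = 0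
  ext a b
  fin_cases a <;> fin_cases b <;>
    simp only [Matrix.zero_apply] <;> assumption
end

section
/- Let V be a 4-dimensional real vector space with a Lorentz metric, and let W be a 2-dimensional subspace of the space of bivectors on V such that every element of W is simple. Then there exists a nonzero vector k ∈ V with F_{ab}k^b = 0 for every F ∈ W, or the blades of all nonzero elements of W lie in a common 3-dimensional subspace; in particular, the span U of the union of the blades of members of W satisfies dim U ≤ 3. -/
open scoped BigOperators
open Matrix

/-! A simple bivector `r ∧ s` has vanishing Pfaffian, while the Pfaffian of `r ∧ s + p ∧ q` is
`det (r, s, p, q)`. So if `F = r ∧ s`, `G = p ∧ q` span `W` and `F + G` is simple as well, then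
`r, s, p, q` are linearly dependent, and a nonzero `k` with `r ⬝ᵥ k = s ⬝ᵥ k = p ⬝ᵥ k = q ⬝ᵥ k = 0`
is annihilated by `F`, `G` and hence by all of `W`. As the members of `W` are antisymmetric, their
ranges lie in the hyperplane `k ⬝ᵥ x = 0`, which bounds the blade span. -/

namespace Matrix

variable {n R : Type*} [CommRing R]

def wedge (r s : n → R) : Matrix n n R := vecMulVec r s - vecMulVec s r

theorem wedge_apply (r s : n → R) (a b : n) : wedge r s a b = r a * s b - s a * r b := rfl

theorem transpose_wedge (r s : n → R) : (wedge r s)ᵀ = -wedge r s := by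
  ext a b
  simp only [transpose_apply, wedge_apply, neg_apply]
  ring

theorem wedge_mulVec [Fintype n] (r s k : n → R) :
    wedge r s *ᵥ k = (s ⬝ᵥ k) • r - (r ⬝ᵥ k) • s := by
  simp only [wedge, sub_mulVec, vecMulVec_mulVec, op_smul_eq_smul]

def pfaffian (F : Matrix (Fin 4) (Fin 4) R) : R :=
  F 0 1 * F 2 3 - F 0 2 * F 1 3 + F 0 3 * F 1 2

theorem pfaffian_wedge (r s : Fin 4 → R) : pfaffian (wedge r s) = 0 := by
  simp only [pfaffian, wedge_apply]
  ring

theorem pfaffian_wedge_add_wedge (r s p q : Fin 4 → R) :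
    pfaffian (wedge r s + wedge p q) = det (of ![r, s, p, q]) := by
  simp only [pfaffian, Fin.isValue, add_apply, wedge_apply, Nat.succ_eq_add_one,
    Nat.reduceAdd, det_succ_row_zero, of_apply, cons_val', cons_val_fin_one, cons_val_zero,
    submatrix_apply, Fin.succ_zero_eq_one, Fin.succAbove, cons_val_one, submatrix_submatrix,
    Function.comp_apply, Fin.succ_one_eq_two, cons_val, det_unique, Fin.default_eq_zero,
    Fin.reduceSucc, Fin.castSucc_zero, Fin.sum_univ_succ, Fin.coe_ofNat_eq_mod, Nat.zero_mod,
    pow_zero, one_mul, lt_self_iff_false, ↓reduceIte, Fin.castSucc_one, Finset.univ_unique,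
    Fin.val_succ, Fin.val_eq_zero, zero_add, pow_one, Fin.castSucc_succ, neg_mul, Fin.succ_pos,
    Finset.sum_neg_distrib, Finset.sum_singleton, not_lt_zero, Fin.reduceCastSucc, even_two,
    Even.neg_pow, one_pow, Fin.reduceLT, Fin.lt_one_iff, Fin.reduceEq]
  ring

end Matrix

theorem isSimpleBivector_iff {F : Matrix (Fin 4) (Fin 4) ℝ} :
    IsSimpleBivector F ↔ ∃ r s, F = wedge r s := by
  simp only [IsSimpleBivector, ← Matrix.ext_iff, wedge_apply, mul_comm (_ : ℝ)]

theorem IsSimpleBivector.transpose_eq_neg {F : Matrix (Fin 4) (Fin 4) ℝ}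
    (hF : IsSimpleBivector F) : Fᵀ = -F := by
  obtain ⟨r, s, rfl⟩ := isSimpleBivector_iff.1 hF
  exact transpose_wedge r s

theorem exists_ne_zero_mulVec_eq_zero_of_isSimpleBivector_add
    {F G : Matrix (Fin 4) (Fin 4) ℝ} (hF : IsSimpleBivector F) (hG : IsSimpleBivector G)
    (hFG : IsSimpleBivector (F + G)) : ∃ k ≠ 0, F *ᵥ k = 0 ∧ G *ᵥ k = 0 := by
  obtain ⟨r, s, rfl⟩ := isSimpleBivector_iff.1 hF
  obtain ⟨p, q, rfl⟩ := isSimpleBivector_iff.1 hG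
  obtain ⟨u, v, huv⟩ := isSimpleBivector_iff.1 hFG
  have hdet : det (of ![r, s, p, q]) = 0 := by
    rw [← pfaffian_wedge_add_wedge, huv, pfaffian_wedge]
  obtain ⟨k, hk, hMk⟩ := exists_mulVec_eq_zero_iff.2 hdet
  have hr : r ⬝ᵥ k = 0 := congrFun hMk 0
  have hs : s ⬝ᵥ k = 0 := congrFun hMk 1
  have hp : p ⬝ᵥ k = 0 := congrFun hMk 2
  have hq : q ⬝ᵥ k = 0 := congrFun hMk 3
  refine ⟨k, hk, ?_, ?_⟩ <;> simp [wedge_mulVec, *]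

theorem finrank_bladeSpan_le_three {W : Submodule ℝ (Matrix (Fin 4) (Fin 4) ℝ)}
    (hanti : ∀ F ∈ W, Fᵀ = -F) {k : Fin 4 → ℝ} (hk : k ≠ 0) (hWk : ∀ F ∈ W, F *ᵥ k = 0) :
    Module.finrank ℝ (bladeSpan W) ≤ 3 := by
  have hle : bladeSpan W ≤ LinearMap.ker (dotProductBilin ℝ ℝ k) := by
    refine iSup_le fun ⟨F, hF⟩ => ?_
    rintro _ ⟨x, rfl⟩
    simp [dotProduct_mulVec, ← mulVec_transpose, hanti F hF, neg_mulVec, hWk F hF]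
  have hk' : k ∉ bladeSpan W := fun h => hk (dotProduct_self_eq_zero.1 (hle h))
  have hlt := Submodule.finrank_lt (s := bladeSpan W) fun htop => hk' (htop ▸ Submodule.mem_top)
  rwa [Module.finrank_fin_fun, Nat.lt_succ_iff] at hlt

theorem two_dim_all_simple_general
    (W : Submodule ℝ (Matrix (Fin 4) (Fin 4) ℝ))
    (hsimple : ∀ F ∈ W, IsSimpleBivector F)
    (hdim : Module.finrank ℝ W = 2) :
    (∃ k : Fin 4 → ℝ, k ≠ 0 ∧ ∀ F ∈ W, Matrix.mulVec F k = 0) ∧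
      Module.finrank ℝ (bladeSpan W) ≤ 3 := by
  let b := Module.finBasisOfFinrankEq ℝ W hdim
  obtain ⟨k, hk, hk0, hk1⟩ := exists_ne_zero_mulVec_eq_zero_of_isSimpleBivector_add
    (hsimple _ (b 0).2) (hsimple _ (b 1).2) (hsimple _ (W.add_mem (b 0).2 (b 1).2))
  have hWk : ∀ F ∈ W, F *ᵥ k = 0 := by
    have : (LinearMap.applyₗ k ∘ₗ (toLin' : Matrix (Fin 4) (Fin 4) ℝ ≃ₗ[ℝ] _).toLinearMap)
        ∘ₗ W.subtype = 0 := b.ext fun i => by fin_cases i <;> simpa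
    exact fun F hF => LinearMap.congr_fun this ⟨F, hF⟩
  exact ⟨⟨k, hk, hWk⟩,
    finrank_bladeSpan_le_three (fun F hF => (hsimple F hF).transpose_eq_neg) hk hWk⟩

/-- if `W` is a 2-dimensional space of bivectors all of whose members
are simple, then some nonzero vector is annihilated by every member of `W`, and
the span `U` of the union of the blades has dimension at most 3. -/
theorem two_dim_all_simple
    (g : Matrix (Fin 4) (Fin 4) ℝ) (hg : IsLorentzMetric g)
    (W : Submodule ℝ (Matrix (Fin 4) (Fin 4) ℝ))
    (hanti : ∀ F ∈ W, ∀ a b, F a b = - F b a)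
    (hsimple : ∀ F ∈ W, IsSimpleBivector F)
    (hdim : Module.finrank ℝ W = 2) :
    (∃ k : Fin 4 → ℝ, k ≠ 0 ∧ ∀ F ∈ W, Matrix.mulVec F k = 0) ∧
      Module.finrank ℝ (bladeSpan W) ≤ 3 :=
  two_dim_all_simple_general W hsimple hdim
end

section
/- Let V be a 4-dimensional real vector space with a Lorentz metric, let W be a subspace of bivectors on V, and let U be the span of the union of the blades of the members of W (taking both blades for non-simple members). If dim U < 4 then every member of W is simple and there exists a nonzero vector k ∈ V with F_{ab}k^b = 0 for all F ∈ W. -/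
open scoped BigOperators
open Matrix

/-!
A nonzero vector `k` orthogonal to the blade span `U` satisfies `kᵀ F = 0` for every `F ∈ W`,
hence `F k = 0` by antisymmetry. So every `F ∈ W` is singular, and since the determinant of an
alternating `4 × 4` matrix is the square of its Pfaffian, the Pfaffian of `F` vanishes. This is
exactly the Plücker relation that makes `F` the wedge product of two of its columns.
-/

theorem Submodule.exists_ne_zero_forall_dotProduct_eq_zero {K n : Type*} [Field K] [Fintype n]
    [DecidableEq n] {U : Submodule K (n → K)} (hU : U ≠ ⊤) :
    ∃ k ≠ 0, ∀ u ∈ U, k ⬝ᵥ u = 0 := by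
  obtain ⟨f, hf0, hfU⟩ := U.exists_dual_map_eq_bot_of_lt_top hU.lt_top inferInstance
  refine ⟨(dotProductEquiv K n).symm f, by simpa using hf0, fun u hu => ?_⟩
  have hfu : f u ∈ U.map f := Submodule.mem_map_of_mem hu
  rw [hfU, Submodule.mem_bot] at hfu
  rw [← dotProductEquiv_apply_apply, LinearEquiv.apply_symm_apply, hfu]

namespace Matrix

variable {R : Type*} [CommRing R]

theorem mulVec_eq_zero_of_forall_dotProduct_mulVec_eq_zero {n : Type*} [Fintype n]
    {F : Matrix n n R} (hF : Fᵀ = -F) {k : n → R} (hk : ∀ x, k ⬝ᵥ F *ᵥ x = 0) :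
    F *ᵥ k = 0 := by
  have hkF : k ᵥ* F = 0 := dotProduct_eq_zero _ fun x => by rw [← dotProduct_mulVec, hk]
  rw [← vecMul_transpose, hF, vecMul_neg, hkF, neg_zero]

def pfaffian4 (F : Matrix (Fin 4) (Fin 4) R) : R :=
  F 0 1 * F 2 3 - F 0 2 * F 1 3 + F 0 3 * F 1 2

variable {F : Matrix (Fin 4) (Fin 4) R}

theorem det_eq_pfaffian4_sq (hF : ∀ a b, F a b = -F b a) (hd : ∀ a, F a a = 0) :
    F.det = pfaffian4 F ^ 2 := by
  rw [det_succ_row_zero, Fin.sum_univ_four]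
  simp only [det_fin_three, submatrix_apply, pfaffian4]
  simp only [Nat.succ_eq_add_one, Nat.reduceAdd, Fin.isValue, Fin.coe_ofNat_eq_mod, Nat.zero_mod,
    pow_zero, hd, mul_zero, Fin.succ_zero_eq_one, Fin.succAbove, Fin.castSucc_zero,
    lt_self_iff_false, ↓reduceIte, Fin.succ_one_eq_two, Fin.castSucc_one, not_lt_zero,
    Fin.reduceSucc, Fin.reduceCastSucc, zero_mul, hF 3 2, mul_neg, neg_zero, sub_self, hF 2 1,
    hF 3 1, zero_add, neg_mul, neg_neg, sub_zero, Nat.one_mod, pow_one, one_mul, zero_lt_one,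
    hF 1 0, Fin.lt_one_iff, Fin.reduceEq, zero_sub, hF 2 0, hF 3 0, Nat.reduceMod, even_two,
    Even.neg_pow, one_pow, Fin.reduceLT, add_zero, Nat.mod_succ]
  ring

/-- The Plücker relation: for distinct indices the difference of the two sides is
`± pfaffian4 F`, and for repeated indices it vanishes by antisymmetry. -/
theorem mul_eq_of_pfaffian4_eq_zero (hF : ∀ a b, F a b = -F b a) (hd : ∀ a, F a a = 0)
    (h : pfaffian4 F = 0) (a b p q : Fin 4) :
    F a b * F p q = F a p * F b q - F a q * F b p := by
  unfold pfaffian4 at h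
  fin_cases a <;> fin_cases b <;> fin_cases p <;> fin_cases q <;>
    simp only [Fin.zero_eta, Fin.mk_one, Fin.reduceFinMk, hd, hF 1 0, hF 2 0, hF 3 0, hF 2 1,
      hF 3 1, hF 3 2] <;>
    first | ring1 | linear_combination h | linear_combination -h

theorem pfaffian4_eq_zero_of_mulVec_eq_zero [IsDomain R] (hF : ∀ a b, F a b = -F b a)
    (hd : ∀ a, F a a = 0) {k : Fin 4 → R} (hk0 : k ≠ 0) (hFk : F *ᵥ k = 0) :
    pfaffian4 F = 0 := by
  have hdet : F.det = 0 := exists_mulVec_eq_zero_iff.mp ⟨k, hk0, hFk⟩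
  rwa [det_eq_pfaffian4_sq hF hd, sq_eq_zero_iff] at hdet

end Matrix

theorem isSimpleBivector_of_pfaffian4_eq_zero {F : Matrix (Fin 4) (Fin 4) ℝ}
    (hF : ∀ a b, F a b = -F b a) (hd : ∀ a, F a a = 0) (h : pfaffian4 F = 0) :
    IsSimpleBivector F := by
  by_cases hF0 : F = 0
  · exact ⟨0, 0, fun a b => by simp [hF0]⟩
  obtain ⟨p, q, hpq⟩ : ∃ p q, F p q ≠ 0 := by
    by_contra! hzero
    exact hF0 (Matrix.ext hzero)
  refine ⟨fun a => F a p, fun b => F b q / F p q, fun a b => ?_⟩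
  field_simp
  linear_combination mul_eq_of_pfaffian4_eq_zero hF hd h a b p q

theorem mulVec_mem_bladeSpan {W : Submodule ℝ (Matrix (Fin 4) (Fin 4) ℝ)}
    {F : Matrix (Fin 4) (Fin 4) ℝ} (hF : F ∈ W) (x : Fin 4 → ℝ) : F *ᵥ x ∈ bladeSpan W :=
  le_iSup (fun G : W => LinearMap.range (mulVecLin (G : Matrix (Fin 4) (Fin 4) ℝ))) ⟨F, hF⟩
    ⟨x, rfl⟩

theorem all_simple_of_bladeSpan_small_general
    (W : Submodule ℝ (Matrix (Fin 4) (Fin 4) ℝ))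
    (hanti : ∀ F ∈ W, ∀ a b, F a b = - F b a)
    (hU : Module.finrank ℝ (bladeSpan W) < 4) :
    (∀ F ∈ W, IsSimpleBivector F) ∧
      ∃ k : Fin 4 → ℝ, k ≠ 0 ∧ ∀ F ∈ W, Matrix.mulVec F k = 0 := by
  have hU_ne_top : bladeSpan W ≠ ⊤ := fun hUtop =>
    hU.ne (by rw [hUtop, finrank_top, Module.finrank_fin_fun])
  obtain ⟨k, hk0, hk⟩ := Submodule.exists_ne_zero_forall_dotProduct_eq_zero hU_ne_top
  have hdiag : ∀ F ∈ W, ∀ a, F a a = 0 := fun F hF a => self_eq_neg.mp (hanti F hF a a)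
  have hkernel : ∀ F ∈ W, F *ᵥ k = 0 := fun F hF =>
    mulVec_eq_zero_of_forall_dotProduct_mulVec_eq_zero (Matrix.ext fun a b => hanti F hF b a)
      fun x => hk _ (mulVec_mem_bladeSpan hF x)
  refine ⟨fun F hF => ?_, k, hk0, hkernel⟩
  exact isSimpleBivector_of_pfaffian4_eq_zero (hanti F hF) (hdiag F hF)
    (pfaffian4_eq_zero_of_mulVec_eq_zero (hanti F hF) (hdiag F hF) hk0 (hkernel F hF))

/-- if the span `U` of the union of the blades of the members of a
space `W` of bivectors has dimension less than 4, then every member of `W` is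
simple and some nonzero vector is annihilated by every member of `W`. -/
theorem all_simple_of_bladeSpan_small
    (g : Matrix (Fin 4) (Fin 4) ℝ) (hg : IsLorentzMetric g)
    (W : Submodule ℝ (Matrix (Fin 4) (Fin 4) ℝ))
    (hanti : ∀ F ∈ W, ∀ a b, F a b = - F b a)
    (hU : Module.finrank ℝ (bladeSpan W) < 4) :
    (∀ F ∈ W, IsSimpleBivector F) ∧
      ∃ k : Fin 4 → ℝ, k ≠ 0 ∧ ∀ F ∈ W, Matrix.mulVec F k = 0 :=
  all_simple_of_bladeSpan_small_general W hanti hU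
end

section
/- Let V be a 4-dimensional real vector space with Lorentz metric g, let S be a symmetric bilinear form on V (representing ψ_{a;b}), and let H be a simple bivector with blade P such that H_a^d S_{bd} + H_b^d S_{ad} = 0. Then every nonzero vector in the blade P of H is an eigenvector of S (with respect to g) and all these eigenvectors have the same eigenvalue; i.e., there exists α ∈ ℝ such that S_{ab} k^b = α g_{ab} k^b for all k ∈ P. -/
open scoped BigOperators
open Matrix

lemma sum_comb (c d : ℝ) (u v w : Fin 4 → ℝ) :
    ∑ i, w i * (c * u i + d * v i) = c * (∑ i, w i * u i) + d * (∑ i, w i * v i) := by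
  rw [Finset.mul_sum, Finset.mul_sum, ← Finset.sum_add_distrib]
  exact Finset.sum_congr rfl fun i _ => by ring

lemma exists_dual_pair (u v : Fin 4 → ℝ)
    (h : ∀ c d : ℝ, (∀ i, c * u i + d * v i = 0) → c = 0 ∧ d = 0) :
    ∃ x y : Fin 4 → ℝ, (∑ i, u i * x i) = 1 ∧ (∑ i, v i * x i) = 0 ∧
      (∑ i, u i * y i) = 0 ∧ (∑ i, v i * y i) = 1 := by
  set A := ∑ i, u i * u i with hA
  set B := ∑ i, u i * v i with hB
  set C := ∑ i, v i * v i with hC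
  have hBA : ∑ i, v i * u i = B := Finset.sum_congr rfl fun i _ => mul_comm _ _
  have sqzero : ∀ w : Fin 4 → ℝ, (∑ i, w i * w i) = 0 → ∀ i, w i = 0 := by
    intro w hw i
    have hnn : ∀ i ∈ Finset.univ, (0:ℝ) ≤ w i * w i := fun i _ => mul_self_nonneg _
    exact mul_self_eq_zero.mp ((Finset.sum_eq_zero_iff_of_nonneg hnn).mp hw i (Finset.mem_univ i))
  have hD : A * C - B * B ≠ 0 := by
    intro h0
    have hw : ∀ i, (fun i => C * u i + (-B) * v i) i * (fun i => C * u i + (-B) * v i) i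
        = C*C*(u i * u i) - 2*C*B*(u i * v i) + B*B*(v i * v i) := fun i => by ring
    have hsum : (∑ i, (fun i => C * u i + (-B) * v i) i * (fun i => C * u i + (-B) * v i) i) = 0 := by
      rw [Finset.sum_congr rfl fun i _ => hw i]
      rw [Finset.sum_add_distrib, Finset.sum_sub_distrib, ← Finset.mul_sum, ← Finset.mul_sum,
        ← Finset.mul_sum, ← hA, ← hB, ← hC]
      linear_combination C * h0
    have hz := sqzero _ hsum
    obtain ⟨hC0, hB0⟩ := h C (-B) hz
    have hv : ∀ i, v i = 0 := by
      apply sqzero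
      rw [← hC]; exact hC0
    have := (h 0 1 (fun i => by rw [hv i]; ring)).2
    exact one_ne_zero this
  set D := A * C - B * B with hDdef
  refine ⟨fun i => (C/D) * u i + (-B/D) * v i, fun i => (-B/D) * u i + (A/D) * v i, ?_, ?_, ?_, ?_⟩
  · rw [sum_comb, ← hA, ← hB]; field_simp; linear_combination hDdef
  · rw [sum_comb, hBA, ← hC]; field_simp; ring
  · rw [sum_comb, ← hA, ← hB]; field_simp; ring
  · rw [sum_comb, hBA, ← hC]; field_simp; linear_combination hDdef

/-- if a simple bivector `H = r ∧ s` (blade `P = span{r,s}`) satisfies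
`H_a{}^d S_{bd} + H_b{}^d S_{ad} = 0` for a symmetric bilinear form `S`, then every
vector of the blade `P` is an eigenvector of `S` with respect to `g`, all with the
same eigenvalue. -/
theorem blade_eigenvectors
    (g : Matrix (Fin 4) (Fin 4) ℝ) (hg : IsLorentzMetric g)
    (S : Matrix (Fin 4) (Fin 4) ℝ) (hS : ∀ a b, S a b = S b a)
    (r s : Fin 4 → ℝ) (hrs : LinearIndependent ℝ ![r, s])
    (hcond : ∀ a b,
      (∑ e, ∑ d, g a e * (r e * s d - r d * s e) * S d b) +
      (∑ e, ∑ d, g b e * (r e * s d - r d * s e) * S d a) = 0) :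
    ∃ α : ℝ, ∀ k ∈ Submodule.span ℝ {r, s}, ∀ a,
      (∑ b, S a b * k b) = α * ∑ b, g a b * k b := by
  obtain ⟨hgsym, P, hPdet, hPg⟩ := hg
  -- det g ≠ 0
  have hdetg : g.det ≠ 0 := by
    have h1 : (Pᵀ * g * P).det = Pᵀ.det * g.det * P.det := by
      rw [Matrix.det_mul, Matrix.det_mul]
    have h2 : (Matrix.diagonal ![(1:ℝ), 1, 1, -1]).det = -1 := by
      simp [Matrix.det_diagonal, Fin.prod_univ_four]
    intro h0
    rw [hPg, h2, Matrix.det_transpose, h0] at h1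
    simp at h1
  -- g.mulVec injective at 0
  have hginj : ∀ z : Fin 4 → ℝ, g.mulVec z = 0 → z = 0 := by
    intro z hz
    have : g⁻¹.mulVec (g.mulVec z) = z := by
      rw [Matrix.mulVec_mulVec, Matrix.nonsing_inv_mul g (isUnit_iff_ne_zero.mpr hdetg),
        Matrix.one_mulVec]
    rw [hz, Matrix.mulVec_zero] at this
    exact this.symm
  -- linear independence coefficients for r, s
  have hrs' : ∀ c d : ℝ, (∀ i, c * r i + d * s i = 0) → c = 0 ∧ d = 0 := by
    intro c d hcd
    have := Fintype.linearIndependent_iff.mp hrs ![c, d] ?_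
    · exact ⟨this 0, this 1⟩
    · funext i
      have := Fin.sum_univ_two (f := fun j => (![c, d] j) • (![r, s] j))
      simp only [Fin.isValue, Matrix.cons_val_zero, Matrix.cons_val_one, Matrix.head_cons] at this ⊢
      rw [this]
      simpa [mul_comm] using hcd i
  -- the key vectors
  set u : Fin 4 → ℝ := fun a => ∑ e, g a e * r e with hu
  set v : Fin 4 → ℝ := fun a => ∑ e, g a e * s e with hv
  set p : Fin 4 → ℝ := fun a => ∑ d, S a d * r d with hp
  set q : Fin 4 → ℝ := fun a => ∑ d, S a d * s d with hq
  -- rewrite the condition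
  have expand : ∀ a b, (∑ e, ∑ d, g a e * (r e * s d - r d * s e) * S d b)
      = u a * q b - v a * p b := by
    intro a b
    have inner : ∀ e, (∑ d, g a e * (r e * s d - r d * s e) * S d b)
        = (g a e * r e) * q b - (g a e * s e) * p b := by
      intro e
      rw [hq, hp]
      rw [Finset.mul_sum, Finset.mul_sum, ← Finset.sum_sub_distrib]
      refine Finset.sum_congr rfl fun d _ => ?_
      rw [hS b d]
      ring
    rw [Finset.sum_congr rfl fun e _ => inner e, Finset.sum_sub_distrib,
      ← Finset.sum_mul, ← Finset.sum_mul, hu, hv]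
  have key : ∀ a b, u a * q b - v a * p b + (u b * q a - v b * p a) = 0 := by
    intro a b
    have h := hcond a b
    rw [expand a b, expand b a] at h
    exact h
  -- u, v linearly independent
  have huv : ∀ c d : ℝ, (∀ i, c * u i + d * v i = 0) → c = 0 ∧ d = 0 := by
    intro c d hcd
    apply hrs'
    have : g.mulVec (c • r + d • s) = 0 := by
      funext i
      simp only [Matrix.mulVec, dotProduct, Pi.add_apply, Pi.smul_apply, smul_eq_mul,
        Pi.zero_apply]
      have := hcd i
      rw [hu, hv] at this
      simp only at this
      rw [Finset.mul_sum, Finset.mul_sum] at this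
      rw [← this, ← Finset.sum_add_distrib]
      exact Finset.sum_congr rfl fun e _ => by ring
    have hz := hginj _ this
    intro i
    have := congrFun hz i
    simpa [mul_comm] using this
  obtain ⟨x, y, hux, hvx, huy, hvy⟩ := exists_dual_pair u v huv
  -- contraction of key with any w
  have contr : ∀ (w : Fin 4 → ℝ) (a : Fin 4),
      u a * (∑ b, q b * w b) - v a * (∑ b, p b * w b)
        + (∑ b, u b * w b) * q a - (∑ b, v b * w b) * p a = 0 := by
    intro w a
    have hsum : ∑ b, (u a * q b - v a * p b + (u b * q a - v b * p a)) * w b = 0 := by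
      refine Finset.sum_eq_zero fun b _ => ?_
      rw [key a b, zero_mul]
    calc u a * (∑ b, q b * w b) - v a * (∑ b, p b * w b)
          + (∑ b, u b * w b) * q a - (∑ b, v b * w b) * p a
        = ∑ b, (u a * q b - v a * p b + (u b * q a - v b * p a)) * w b := by
          rw [Finset.mul_sum, Finset.mul_sum, Finset.sum_mul, Finset.sum_mul,
            ← Finset.sum_sub_distrib, ← Finset.sum_add_distrib, ← Finset.sum_sub_distrib]
          exact Finset.sum_congr rfl fun b _ => by ring
      _ = 0 := hsum
  -- abbreviations for the contracted scalars
  have hqw : ∀ b, q b * x b = q b * x b := fun _ => rfl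
  set qx := ∑ b, q b * x b with hqx
  set px := ∑ b, p b * x b with hpx
  set qy := ∑ b, q b * y b with hqy
  set py := ∑ b, p b * y b with hpy
  have hx : ∀ a, q a = v a * px - u a * qx := by
    intro a
    have h := contr x a
    rw [hux, hvx] at h
    linarith
  have hy : ∀ a, p a = u a * qy - v a * py := by
    intro a
    have h := contr y a
    rw [huy, hvy] at h
    linarith
  -- compute the scalars
  have hqx0 : qx = 0 := by
    have : qx = ∑ b, (v b * px - u b * qx) * x b :=
      Finset.sum_congr rfl fun b _ => by rw [hx b]
    rw [Finset.sum_congr rfl (fun b _ => by ring :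
        ∀ b ∈ Finset.univ, (v b * px - u b * qx) * x b = px * (v b * x b) - qx * (u b * x b)),
      Finset.sum_sub_distrib, ← Finset.mul_sum, ← Finset.mul_sum, hvx, hux] at this
    linarith
  have hpy0 : py = 0 := by
    have : py = ∑ b, (u b * qy - v b * py) * y b :=
      Finset.sum_congr rfl fun b _ => by rw [hy b]
    rw [Finset.sum_congr rfl (fun b _ => by ring :
        ∀ b ∈ Finset.univ, (u b * qy - v b * py) * y b = qy * (u b * y b) - py * (v b * y b)),
      Finset.sum_sub_distrib, ← Finset.mul_sum, ← Finset.mul_sum, hvy, huy] at this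
    linarith
  have hqypx : qy = px := by
    have : qy = ∑ b, (v b * px - u b * qx) * y b :=
      Finset.sum_congr rfl fun b _ => by rw [hx b]
    rw [Finset.sum_congr rfl (fun b _ => by ring :
        ∀ b ∈ Finset.univ, (v b * px - u b * qx) * y b = px * (v b * y b) - qx * (u b * y b)),
      Finset.sum_sub_distrib, ← Finset.mul_sum, ← Finset.mul_sum, hvy, huy] at this
    rw [this]; ring
  -- final eigenvalue
  refine ⟨px, ?_⟩
  have hpa : ∀ a, p a = px * u a := by
    intro a; rw [hy a, hqypx, hpy0]; ring
  have hqa : ∀ a, q a = px * v a := by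
    intro a; rw [hx a, hqx0]; ring
  intro k hk a
  obtain ⟨c, d, hcd⟩ := Submodule.mem_span_pair.mp hk
  have hk' : ∀ b, k b = c * r b + d * s b := by
    intro b
    rw [← hcd]
    simp [mul_comm]
  calc (∑ b, S a b * k b) = ∑ b, S a b * (c * r b + d * s b) :=
        Finset.sum_congr rfl fun b _ => by rw [hk' b]
    _ = c * (∑ b, S a b * r b) + d * (∑ b, S a b * s b) := sum_comb c d r s (S a)
    _ = c * p a + d * q a := by rw [hp, hq]
    _ = px * (c * u a + d * v a) := by rw [hpa, hqa]; ring
    _ = px * (c * (∑ b, g a b * r b) + d * (∑ b, g a b * s b)) := by rw [hu, hv]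
    _ = px * ∑ b, g a b * (c * r b + d * s b) := by rw [sum_comb c d r s (g a)]
    _ = px * ∑ b, g a b * k b := by
        congr 1
        exact Finset.sum_congr rfl fun b _ => by rw [hk' b]
end

section
/- Let V be a 4-dimensional real vector space with Lorentz metric g, and let (l, n, x, y) be a null tetrad (l, n null with l·n = 1; x, y spacelike unit, mutually orthogonal and orthogonal to l, n). Let S be a symmetric bilinear form on V such that both bivectors H₁ = l ∧ x and H₂ = l ∧ y satisfy H_a^d S_{bd} + H_b^d S_{ad} = 0. Then S_{ab} = α g_{ab} + β l_a l_b for some real numbers α, β. -/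
open scoped BigOperators
open Matrix

/-- The inner product of two vectors with respect to the metric `g`. -/
def ip (g : Matrix (Fin 4) (Fin 4) ℝ) (u w : Fin 4 → ℝ) : ℝ :=
  ∑ a, ∑ b, g a b * u a * w b

/-- `(l,n,x,y)` is a null tetrad for `g`: `l`, `n` are null with `l·n = 1`, and
`x`, `y` are unit spacelike, mutually orthogonal and orthogonal to `l` and `n`. -/
def IsNullTetrad (g : Matrix (Fin 4) (Fin 4) ℝ) (l n x y : Fin 4 → ℝ) : Prop :=
  ip g l l = 0 ∧ ip g n n = 0 ∧ ip g l n = 1 ∧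
  ip g x x = 1 ∧ ip g y y = 1 ∧
  ip g l x = 0 ∧ ip g l y = 0 ∧ ip g n x = 0 ∧ ip g n y = 0 ∧ ip g x y = 0

/-- The bilinear form `S` evaluated on a pair of vectors. -/
def Qf (S : Matrix (Fin 4) (Fin 4) ℝ) (p q : Fin 4 → ℝ) : ℝ :=
  ∑ d, ∑ b, p d * S d b * q b

/-- Contracting the bivector condition with a pair of vectors. -/
lemma contract_aux (g S : Matrix (Fin 4) (Fin 4) ℝ) (l w : Fin 4 → ℝ)
    (hcond : ∀ a b,
      (∑ e, ∑ d, g a e * (l e * w d - l d * w e) * S d b) +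
      (∑ e, ∑ d, g b e * (l e * w d - l d * w e) * S d a) = 0)
    (u v : Fin 4 → ℝ) :
    ip g u l * Qf S w v - ip g u w * Qf S l v
      + ip g v l * Qf S w u - ip g v w * Qf S l u = 0 := by
  have h := hcond
  simp only [Fin.sum_univ_four] at h
  simp only [ip, Qf, Fin.sum_univ_four]
  linear_combination
    u 0 * v 0 * h 0 0 + u 0 * v 1 * h 0 1 + u 0 * v 2 * h 0 2 + u 0 * v 3 * h 0 3 +
    u 1 * v 0 * h 1 0 + u 1 * v 1 * h 1 1 + u 1 * v 2 * h 1 2 + u 1 * v 3 * h 1 3 +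
    u 2 * v 0 * h 2 0 + u 2 * v 1 * h 2 1 + u 2 * v 2 * h 2 2 + u 2 * v 3 * h 2 3 +
    u 3 * v 0 * h 3 0 + u 3 * v 1 * h 3 1 + u 3 * v 2 * h 3 2 + u 3 * v 3 * h 3 3

lemma Qf_symm (S : Matrix (Fin 4) (Fin 4) ℝ) (hS : ∀ a b, S a b = S b a)
    (p q : Fin 4 → ℝ) : Qf S p q = Qf S q p := by
  unfold Qf
  rw [Finset.sum_comm]
  exact Finset.sum_congr rfl fun b _ => Finset.sum_congr rfl fun d _ => by
    rw [hS d b]; ring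

/-- if both bivectors `l ∧ x` and `l ∧ y` of a null tetrad satisfy
`H_a{}^d S_{bd} + H_b{}^d S_{ad} = 0` for a symmetric bilinear form `S`, then
`S_{ab} = α g_{ab} + β l_a l_b` for some reals `α, β`. -/
theorem S_eq_alpha_g_plus_beta_ll
    (g : Matrix (Fin 4) (Fin 4) ℝ) (hg : IsLorentzMetric g)
    (l n x y : Fin 4 → ℝ) (htet : IsNullTetrad g l n x y)
    (S : Matrix (Fin 4) (Fin 4) ℝ) (hS : ∀ a b, S a b = S b a)
    (hcondx : ∀ a b,
      (∑ e, ∑ d, g a e * (l e * x d - l d * x e) * S d b) +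
      (∑ e, ∑ d, g b e * (l e * x d - l d * x e) * S d a) = 0)
    (hcondy : ∀ a b,
      (∑ e, ∑ d, g a e * (l e * y d - l d * y e) * S d b) +
      (∑ e, ∑ d, g b e * (l e * y d - l d * y e) * S d a) = 0) :
    ∃ α β : ℝ, ∀ a b,
      S a b = α * g a b + β * (∑ c, g a c * l c) * (∑ c, g b c * l c) := by
  obtain ⟨gsymm, P, hP, hPg⟩ := hg
  obtain ⟨hll, hnn, hln, hxx, hyy, hlx, hly, hnx, hny, hxy⟩ := htet
  have ipsymm : ∀ u w, ip g u w = ip g w u := by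
    intro u w
    unfold ip
    rw [Finset.sum_comm]
    exact Finset.sum_congr rfl fun b _ => Finset.sum_congr rfl fun a _ => by
      rw [gsymm a b]; ring
  have hnl : ip g n l = 1 := by rw [ipsymm]; exact hln
  have hxl : ip g x l = 0 := by rw [ipsymm]; exact hlx
  have hyl : ip g y l = 0 := by rw [ipsymm]; exact hly
  have hxn : ip g x n = 0 := by rw [ipsymm]; exact hnx
  have hyn : ip g y n = 0 := by rw [ipsymm]; exact hny
  have hyx : ip g y x = 0 := by rw [ipsymm]; exact hxy
  have Cx := contract_aux g S l x hcondx
  have Cy := contract_aux g S l y hcondy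
  set α := Qf S l n with hα
  set β := Qf S n n with hβ
  have hQxn : Qf S x n = 0 := by
    have h := Cx n n; rw [hnl, hnx] at h; linarith
  have hQnx : Qf S n x = 0 := by rw [Qf_symm S hS]; exact hQxn
  have hQyn : Qf S y n = 0 := by
    have h := Cy n n; rw [hnl, hny] at h; linarith
  have hQny : Qf S n y = 0 := by rw [Qf_symm S hS]; exact hQyn
  have hQxl : Qf S x l = 0 := by
    have h := Cx n l; rw [hnl, hnx, hll, hlx] at h; linarith
  have hQlx : Qf S l x = 0 := by rw [Qf_symm S hS]; exact hQxl
  have hQyl : Qf S y l = 0 := by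
    have h := Cy n l; rw [hnl, hny, hll, hly] at h; linarith
  have hQly : Qf S l y = 0 := by rw [Qf_symm S hS]; exact hQyl
  have hQll : Qf S l l = 0 := by
    have h := Cx x l; rw [hxl, hxx, hll, hlx, hQxl, hQlx] at h; linarith
  have hQxx : Qf S x x = α := by
    have h := Cx n x; rw [hnl, hnx, hxl, hxx, hQxn, hQlx] at h; linarith
  have hQyy : Qf S y y = α := by
    have h := Cy n y; rw [hnl, hny, hyl, hyy, hQyn, hQly] at h; linarith
  have hQxy : Qf S x y = 0 := by
    have h := Cx n y; rw [hnl, hnx, hyl, hyx, hQxn, hQly] at h; linarith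
  have hQyx : Qf S y x = 0 := by rw [Qf_symm S hS]; exact hQxy
  have hQnl : Qf S n l = α := by rw [Qf_symm S hS]
  have hQln : Qf S l n = α := hα.symm
  have hQnn : Qf S n n = β := hβ.symm
  -- the matrices
  set M : Matrix (Fin 4) (Fin 4) ℝ := Matrix.of ![l, n, x, y] with hM
  set T : Matrix (Fin 4) (Fin 4) ℝ :=
    Matrix.of (fun a b => α * g a b + β * (∑ c, g a c * l c) * (∑ c, g b c * l c)) with hT
  have hMS : ∀ u v : Fin 4 → ℝ,
      (∑ k, (∑ m, u m * S m k) * v k) = Qf S u v := by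
    intro u v
    simp only [Qf, Fin.sum_univ_four]
    try ring
  have hMT : ∀ u v : Fin 4 → ℝ,
      (∑ k, (∑ m, u m * T m k) * v k) =
        α * ip g u v + β * ip g u l * ip g v l := by
    intro u v
    simp only [hT, Matrix.of_apply, ip, Fin.sum_univ_four]
    try ring
  have entry : ∀ i j, (M * S * Mᵀ) i j = (M * T * Mᵀ) i j := by
    intro i j
    have e1 : (M * S * Mᵀ) i j = Qf S (M i) (M j) := by
      rw [← hMS]
      simp only [Matrix.mul_apply, Matrix.transpose_apply]
    have e2 : (M * T * Mᵀ) i j = α * ip g (M i) (M j) + β * ip g (M i) l * ip g (M j) l := by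
      rw [← hMT]
      simp only [Matrix.mul_apply, Matrix.transpose_apply]
    rw [e1, e2]
    fin_cases i <;> fin_cases j
    · show Qf S l l = α * ip g l l + β * ip g l l * ip g l l
      rw [hQll, hll]; ring
    · show Qf S l n = α * ip g l n + β * ip g l l * ip g n l
      rw [hQln, hln, hll]; ring
    · show Qf S l x = α * ip g l x + β * ip g l l * ip g x l
      rw [hQlx, hlx, hll]; ring
    · show Qf S l y = α * ip g l y + β * ip g l l * ip g y l
      rw [hQly, hly, hll]; ring
    · show Qf S n l = α * ip g n l + β * ip g n l * ip g l l
      rw [hQnl, hnl, hll]; ring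
    · show Qf S n n = α * ip g n n + β * ip g n l * ip g n l
      rw [hQnn, hnn, hnl]; ring
    · show Qf S n x = α * ip g n x + β * ip g n l * ip g x l
      rw [hQnx, hnx, hxl]; ring
    · show Qf S n y = α * ip g n y + β * ip g n l * ip g y l
      rw [hQny, hny, hyl]; ring
    · show Qf S x l = α * ip g x l + β * ip g x l * ip g l l
      rw [hQxl, hxl, hll]; ring
    · show Qf S x n = α * ip g x n + β * ip g x l * ip g n l
      rw [hQxn, hxn, hxl]; ring
    · show Qf S x x = α * ip g x x + β * ip g x l * ip g x l
      rw [hQxx, hxx, hxl]; ring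
    · show Qf S x y = α * ip g x y + β * ip g x l * ip g y l
      rw [hQxy, hxy, hxl]; ring
    · show Qf S y l = α * ip g y l + β * ip g y l * ip g l l
      rw [hQyl, hyl, hll]; ring
    · show Qf S y n = α * ip g y n + β * ip g y l * ip g n l
      rw [hQyn, hyn, hyl]; ring
    · show Qf S y x = α * ip g y x + β * ip g y l * ip g x l
      rw [hQyx, hyx, hyl]; ring
    · show Qf S y y = α * ip g y y + β * ip g y l * ip g y l
      rw [hQyy, hyy, hyl]; ring
  have hMST : M * S * Mᵀ = M * T * Mᵀ := by
    ext i j; exact entry i j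
  have hGram : M * g * Mᵀ = !![0,1,0,0; 1,0,0,0; 0,0,1,0; 0,0,0,1] := by
    ext i j
    have e : (M * g * Mᵀ) i j = ip g (M i) (M j) := by
      simp only [Matrix.mul_apply, Matrix.transpose_apply, ip, Fin.sum_univ_four]
      try ring
    rw [e]
    fin_cases i <;> fin_cases j
    · show ip g l l = 0; exact hll
    · show ip g l n = 1; exact hln
    · show ip g l x = 0; exact hlx
    · show ip g l y = 0; exact hly
    · show ip g n l = 1; exact hnl
    · show ip g n n = 0; exact hnn
    · show ip g n x = 0; exact hnx
    · show ip g n y = 0; exact hny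
    · show ip g x l = 0; exact hxl
    · show ip g x n = 0; exact hxn
    · show ip g x x = 1; exact hxx
    · show ip g x y = 0; exact hxy
    · show ip g y l = 0; exact hyl
    · show ip g y n = 0; exact hyn
    · show ip g y x = 0; exact hyx
    · show ip g y y = 1; exact hyy
  have hdetG : (M * g * Mᵀ).det = -1 := by
    rw [hGram]
    simp [Matrix.det_succ_row_zero, Fin.sum_univ_succ,
      show ((1:Fin 4).succAbove 2) = 3 by decide]
  have hdetM : M.det ≠ 0 := by
    intro h0
    rw [Matrix.det_mul, Matrix.det_mul, h0, Matrix.det_transpose, h0] at hdetG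
    norm_num at hdetG
  have hMunit : IsUnit M.det := isUnit_iff_ne_zero.mpr hdetM
  have hMTunit : IsUnit Mᵀ.det := by rw [Matrix.det_transpose]; exact hMunit
  have hST : S = T := by
    have h1 : M⁻¹ * (M * S * Mᵀ) * (Mᵀ)⁻¹ = S := by
      rw [Matrix.mul_assoc M S Mᵀ, ← Matrix.mul_assoc M⁻¹ M (S * Mᵀ),
        Matrix.nonsing_inv_mul M hMunit, Matrix.one_mul, Matrix.mul_assoc,
        Matrix.mul_nonsing_inv Mᵀ hMTunit, Matrix.mul_one]
    have h2 : M⁻¹ * (M * T * Mᵀ) * (Mᵀ)⁻¹ = T := by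
      rw [Matrix.mul_assoc M T Mᵀ, ← Matrix.mul_assoc M⁻¹ M (T * Mᵀ),
        Matrix.nonsing_inv_mul M hMunit, Matrix.one_mul, Matrix.mul_assoc,
        Matrix.mul_nonsing_inv Mᵀ hMTunit, Matrix.mul_one]
    rw [← h1, hMST, h2]
  refine ⟨α, β, fun a b => ?_⟩
  have h := congrFun (congrFun hST a) b
  rw [h]
  rfl
end

section
/- Let (M,g) be a pseudo-Riemannian manifold with Levi-Civita connection ∇ and let l be a nowhere-zero recurrent vector field, i.e., ∇_b l_a = l_a p_b for a 1-form p. Then l_d R^d_{abc} = l_a G_{bc} where G_{ab} = 2 p_{[a;b]} (G = dp up to sign/normalization), and moreover G_{ab} l^b = γ l_a for some function γ (using the first Bianchi identity R^a_{[bcd]} = 0 and the nullity or otherwise of l; in the space-time case with l null, the contraction of the identity G_{[ab} l_{c]} = 0 with a vector not orthogonal to l yields this). -/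
open scoped BigOperators

/-- Partial derivative in the `i`-th coordinate direction of a function on ℝ⁴. -/
noncomputable def pd (i : Fin 4) (f : (Fin 4 → ℝ) → ℝ) (q : Fin 4 → ℝ) : ℝ :=
  fderiv ℝ f q (Pi.single i 1)

/-- Christoffel symbols `Γ^a_{bc}` of the Levi-Civita connection of the metric
field `g`. -/
noncomputable def christoffel (g : (Fin 4 → ℝ) → Matrix (Fin 4) (Fin 4) ℝ)
    (a b c : Fin 4) (q : Fin 4 → ℝ) : ℝ :=
  (1 / 2) * ∑ d, (g q)⁻¹ a d *
    (pd b (fun r => g r d c) q + pd c (fun r => g r d b) q - pd d (fun r => g r b c) q)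

/-- Covariant derivative `ω_{a;b}` of a covector field `ω`. -/
noncomputable def covD1 (g : (Fin 4 → ℝ) → Matrix (Fin 4) (Fin 4) ℝ)
    (ω : Fin 4 → (Fin 4 → ℝ) → ℝ) (a b : Fin 4) (q : Fin 4 → ℝ) : ℝ :=
  pd b (ω a) q - ∑ c, christoffel g c a b q * ω c q

/-- Covariant derivative `T_{ab;c}` of a (0,2) tensor field `T`. -/
noncomputable def covD2 (g : (Fin 4 → ℝ) → Matrix (Fin 4) (Fin 4) ℝ)
    (T : Fin 4 → Fin 4 → (Fin 4 → ℝ) → ℝ) (a b c : Fin 4) (q : Fin 4 → ℝ) : ℝ :=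
  pd c (T a b) q - ∑ d, christoffel g d a c q * T d b q
    - ∑ d, christoffel g d b c q * T a d q

private lemma pd_mul {f1 f2 : (Fin 4 → ℝ) → ℝ} {q : Fin 4 → ℝ}
    (h1 : DifferentiableAt ℝ f1 q) (h2 : DifferentiableAt ℝ f2 q) (i : Fin 4) :
    pd i (fun r => f1 r * f2 r) q = pd i f1 q * f2 q + f1 q * pd i f2 q := by
  simp only [pd, fderiv_fun_mul h1 h2, ContinuousLinearMap.add_apply,
    ContinuousLinearMap.smul_apply, smul_eq_mul]
  ring

/-- if `l` is a nowhere-zero null recurrent covector field,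
`l_{a;b} = l_a p_b`, then `l_d R^d{}_{abc} = l_a G_{bc}` where
`G_{ab} = p_{a;b} − p_{b;a}`, and `G_{ab} l^b = γ l_a` for some function `γ`.
The curvature `R` is characterised by the Ricci identity
`2ω_{a;[bc]} = ω_d R^d{}_{abc}` and satisfies the first Bianchi identity. -/
theorem recurrent_vector_curvature
    (g : (Fin 4 → ℝ) → Matrix (Fin 4) (Fin 4) ℝ)
    (hgsym : ∀ q a b, g q a b = g q b a)
    (hgdet : ∀ q, IsUnit (g q).det)
    (hgsm : ∀ a b, ContDiff ℝ (⊤ : ℕ∞) (fun q => g q a b))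
    (R : Fin 4 → Fin 4 → Fin 4 → Fin 4 → (Fin 4 → ℝ) → ℝ)
    (hRicci : ∀ ω : Fin 4 → (Fin 4 → ℝ) → ℝ, (∀ a, ContDiff ℝ (⊤ : ℕ∞) (ω a)) →
      ∀ a b c q, covD2 g (covD1 g ω) a b c q - covD2 g (covD1 g ω) a c b q =
        ∑ d, ω d q * R d a b c q)
    (hBianchi : ∀ a b c d q, R a b c d q + R a c d b q + R a d b c q = 0)
    (l p1 : Fin 4 → (Fin 4 → ℝ) → ℝ)
    (hlsm : ∀ a, ContDiff ℝ (⊤ : ℕ∞) (l a)) (hpsm : ∀ a, ContDiff ℝ (⊤ : ℕ∞) (p1 a))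
    (hl0 : ∀ q, ∃ a, l a q ≠ 0)
    (hnull : ∀ q, ∑ a, ∑ b, (g q)⁻¹ a b * l a q * l b q = 0)
    (hrec : ∀ a b q, covD1 g l a b q = l a q * p1 b q) :
    (∀ a b c q, ∑ d, l d q * R d a b c q =
      l a q * (covD1 g p1 b c q - covD1 g p1 c b q)) ∧
    ∃ γ : (Fin 4 → ℝ) → ℝ, ∀ a q,
      (∑ b, (covD1 g p1 a b q - covD1 g p1 b a q) * ∑ c, (g q)⁻¹ b c * l c q) =
        γ q * l a q := by
  -- abbreviation for G
  set Gf : Fin 4 → Fin 4 → (Fin 4 → ℝ) → ℝ :=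
    fun b c q => covD1 g p1 b c q - covD1 g p1 c b q with hGf
  have hld : ∀ a q, DifferentiableAt ℝ (l a) q :=
    fun a q => ((hlsm a).differentiable (by simp)).differentiableAt
  have hpd : ∀ a q, DifferentiableAt ℝ (p1 a) q :=
    fun a q => ((hpsm a).differentiable (by simp)).differentiableAt
  have hfun : ∀ a b, covD1 g l a b = fun q => l a q * p1 b q :=
    fun a b => funext fun q => hrec a b q
  have hcov2 : ∀ a b c q, covD2 g (covD1 g l) a b c q =
      l a q * p1 c q * p1 b q + l a q * covD1 g p1 b c q := by
    intro a b c q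
    have : covD2 g (covD1 g l) a b c q =
        pd c (fun r => l a r * p1 b r) q
          - ∑ d, christoffel g d a c q * (l d q * p1 b q)
          - ∑ d, christoffel g d b c q * (l a q * p1 d q) := by
      simp only [covD2, hfun, hrec]
    rw [this, pd_mul (hld a q) (hpd b q) c]
    have h1 : ∑ d, christoffel g d a c q * (l d q * p1 b q) =
        (∑ d, christoffel g d a c q * l d q) * p1 b q := by
      rw [Finset.sum_mul]; exact Finset.sum_congr rfl fun d _ => by ring
    have h2 : ∑ d, christoffel g d b c q * (l a q * p1 d q) =
        l a q * ∑ d, christoffel g d b c q * p1 d q := by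
      rw [Finset.mul_sum]; exact Finset.sum_congr rfl fun d _ => by ring
    rw [h1, h2]
    have h3 : pd c (l a) q - (∑ d, christoffel g d a c q * l d q) = covD1 g l a c q := rfl
    have h4 : pd c (p1 b) q - (∑ d, christoffel g d b c q * p1 d q) = covD1 g p1 b c q := rfl
    rw [show pd c (l a) q * p1 b q + l a q * pd c (p1 b) q
          - (∑ d, christoffel g d a c q * l d q) * p1 b q
          - l a q * ∑ d, christoffel g d b c q * p1 d q
        = (pd c (l a) q - ∑ d, christoffel g d a c q * l d q) * p1 b q
          + l a q * (pd c (p1 b) q - ∑ d, christoffel g d b c q * p1 d q) by ring,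
      h3, h4, hrec]
  have part1 : ∀ a b c q, ∑ d, l d q * R d a b c q = l a q * Gf a b q → True := fun _ _ _ _ _ => trivial
  clear part1
  have h1 : ∀ a b c q, ∑ d, l d q * R d a b c q = l a q * Gf b c q := by
    intro a b c q
    rw [← hRicci l hlsm a b c q, hcov2, hcov2, hGf]
    ring
  refine ⟨fun a b c q => h1 a b c q, ?_⟩
  -- cyclic identity
  have hcyc : ∀ a b c q, l a q * Gf b c q + l b q * Gf c a q + l c q * Gf a b q = 0 := by
    intro a b c q
    rw [← h1 a b c q, ← h1 b c a q, ← h1 c a b q, ← Finset.sum_add_distrib,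
      ← Finset.sum_add_distrib]
    refine Finset.sum_eq_zero fun d _ => ?_
    linear_combination l d q * hBianchi d a b c q
  set L : Fin 4 → (Fin 4 → ℝ) → ℝ := fun b q => ∑ c, (g q)⁻¹ b c * l c q with hL
  set F : Fin 4 → (Fin 4 → ℝ) → ℝ := fun a q => ∑ b, Gf a b q * L b q with hF
  have hnull' : ∀ q, ∑ c, l c q * L c q = 0 := by
    intro q
    rw [← hnull q]
    exact Finset.sum_congr rfl fun c _ => by
      rw [Finset.mul_sum]
      exact Finset.sum_congr rfl fun b _ => by ring
  have hsym : ∀ a b q, l a q * F b q = l b q * F a q := by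
    intro a b q
    have key : ∑ c, (l a q * Gf b c q + l b q * Gf c a q + l c q * Gf a b q) * L c q = 0 :=
      Finset.sum_eq_zero fun c _ => by rw [hcyc a b c q, zero_mul]
    have expand : ∑ c, (l a q * Gf b c q + l b q * Gf c a q + l c q * Gf a b q) * L c q
        = l a q * F b q - l b q * F a q + Gf a b q * ∑ c, l c q * L c q := by
      rw [hF]
      simp only [Finset.mul_sum, ← Finset.sum_sub_distrib, ← Finset.sum_add_distrib]
      refine Finset.sum_congr rfl fun c _ => ?_
      have : Gf c a q = -Gf a c q := by rw [hGf]; ring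
      rw [this]; ring
    rw [expand, hnull' q, mul_zero, add_zero] at key
    linarith
  choose a0 ha0 using hl0
  refine ⟨fun q => F (a0 q) q / l (a0 q) q, fun a q => ?_⟩
  have goalF : (∑ b, (covD1 g p1 a b q - covD1 g p1 b a q) * ∑ c, (g q)⁻¹ b c * l c q)
      = F a q := rfl
  rw [goalF]
  rw [div_mul_eq_mul_div, eq_div_iff (ha0 q)]
  linear_combination -hsym a (a0 q) q
end

section
/- Let V be a 4-dimensional real vector space with Lorentz metric g, null tetrad (l,n,x,y), and suppose a covector χ and covectors ρ', σ' and a bivector H satisfy 2g_{ab}χ_c + g_{ac}χ_b + g_{bc}χ_a = H_{ab}ρ'_c + g_{ab}σ'_c. Then χ = 0. -/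
open scoped BigOperators
open Matrix

lemma sum_contract (g : Matrix (Fin 4) (Fin 4) ℝ) (f u w : Fin 4 → ℝ)
    (h : ∀ a b c, g a b * f c = g a c * f b) (c : Fin 4) :
    ip g u w * f c = (∑ a, g a c * u a) * (∑ b, w b * f b) := by
  rw [ip, Finset.sum_mul, Finset.sum_mul]
  refine Finset.sum_congr rfl fun a _ => ?_
  rw [Finset.sum_mul, Finset.mul_sum]
  refine Finset.sum_congr rfl fun b _ => ?_
  linear_combination (u a * w b) * h a b c

lemma sum_contract2 (g : Matrix (Fin 4) (Fin 4) ℝ) (f u : Fin 4 → ℝ)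
    (h : ∀ a b c, g a b * f c + g a c * f b + g b c * f a = 0) (c : Fin 4) :
    ip g u u * f c + 2 * ((∑ a, g a c * u a) * (∑ b, u b * f b)) = 0 := by
  have key : ∑ a, ∑ b, u a * u b * (g a b * f c + g a c * f b + g b c * f a) = 0 := by
    simp [h]
  have e1 : ip g u u * f c = ∑ a, ∑ b, u a * u b * (g a b * f c) := by
    rw [ip, Finset.sum_mul]
    refine Finset.sum_congr rfl fun a _ => ?_
    rw [Finset.sum_mul]
    refine Finset.sum_congr rfl fun b _ => ?_
    ring
  have e2 : (∑ a, g a c * u a) * (∑ b, u b * f b)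
      = ∑ a, ∑ b, u a * u b * (g a c * f b) := by
    rw [Finset.sum_mul]
    refine Finset.sum_congr rfl fun a _ => ?_
    rw [Finset.mul_sum]
    refine Finset.sum_congr rfl fun b _ => ?_
    ring
  have e3 : (∑ a, g a c * u a) * (∑ b, u b * f b)
      = ∑ a, ∑ b, u a * u b * (g b c * f a) := by
    rw [Finset.sum_comm (f := fun a b => u a * u b * (g b c * f a))]
    rw [Finset.sum_mul]
    refine Finset.sum_congr rfl fun b _ => ?_
    rw [Finset.mul_sum]
    refine Finset.sum_congr rfl fun a _ => ?_
    ring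
  have split : (∑ a, ∑ b, u a * u b * (g a b * f c + g a c * f b + g b c * f a))
      = (∑ a, ∑ b, u a * u b * (g a b * f c)) + (∑ a, ∑ b, u a * u b * (g a c * f b))
        + (∑ a, ∑ b, u a * u b * (g b c * f a)) := by
    simp only [mul_add, Finset.sum_add_distrib]
  linarith [key, e1, e2, e3, split]

/-- if a covector `χ`, covectors `ρ'`, `σ'` and a bivector `H`
satisfy `2g_{ab}χ_c + g_{ac}χ_b + g_{bc}χ_a = H_{ab}ρ'_c + g_{ab}σ'_c`, then
`χ = 0`. -/
theorem chi_vanishes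
    (g : Matrix (Fin 4) (Fin 4) ℝ) (hg : IsLorentzMetric g)
    (l n x y : Fin 4 → ℝ) (htet : IsNullTetrad g l n x y)
    (H : Matrix (Fin 4) (Fin 4) ℝ) (hH : ∀ a b, H a b = - H b a)
    (χ ρ' σ' : Fin 4 → ℝ)
    (heq : ∀ a b c, 2 * g a b * χ c + g a c * χ b + g b c * χ a =
      H a b * ρ' c + g a b * σ' c) :
    χ = 0 := by
  obtain ⟨hgs, -⟩ := hg
  obtain ⟨-, -, -, hxx, hyy, -, -, -, -, hxy⟩ := htet
  -- Step 1: the H-term vanishes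
  have hHρ : ∀ a b c, H a b * ρ' c = 0 := by
    intro a b c
    have h1 := heq a b c
    have h2 := heq b a c
    rw [hgs b a, hH b a] at h2
    linear_combination (h2 - h1) / 2
  have heq2 : ∀ a b c, 2 * g a b * χ c + g a c * χ b + g b c * χ a = g a b * σ' c := by
    intro a b c
    have := heq a b c
    rw [hHρ a b c] at this
    linarith
  -- Step 2: τ = χ - σ' satisfies g_{ab}τ_c = g_{ac}τ_b
  set τ : Fin 4 → ℝ := fun c => χ c - σ' c with hτdef
  have hτ : ∀ a b c, g a b * τ c = g a c * τ b := by
    intro a b c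
    have h1 := heq2 a b c
    have h2 := heq2 a c b
    rw [hgs c b] at h2
    simp only [hτdef]
    linear_combination h1 - h2
  -- ip g y x = 0
  have hyx : ip g y x = 0 := by
    rw [← hxy, ip, ip, Finset.sum_comm]
    refine Finset.sum_congr rfl fun a _ => Finset.sum_congr rfl fun b _ => ?_
    rw [hgs a b]; ring
  have hx' : ∀ c, τ c = (∑ a, g a c * x a) * (∑ b, x b * τ b) := by
    intro c
    have := sum_contract g τ x x hτ c
    rwa [hxx, one_mul] at this
  have hy' : ∀ c, τ c = (∑ a, g a c * y a) * (∑ b, y b * τ b) := by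
    intro c
    have := sum_contract g τ y y hτ c
    rwa [hyy, one_mul] at this
  have hSx : (∑ b, x b * τ b) = 0 := by
    calc (∑ c, x c * τ c)
        = ∑ c, (∑ a, g a c * y a * x c) * (∑ b, y b * τ b) := by
          refine Finset.sum_congr rfl fun c _ => ?_
          rw [hy' c]
          have : (∑ a, g a c * y a * x c) = (∑ a, g a c * y a) * x c :=
            (Finset.sum_mul _ _ _).symm
          rw [this]; ring
      _ = (∑ c, ∑ a, g a c * y a * x c) * (∑ b, y b * τ b) :=
          (Finset.sum_mul _ _ _).symm
      _ = ip g y x * (∑ b, y b * τ b) := by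
          congr 1
          rw [ip, Finset.sum_comm]
      _ = 0 := by rw [hyx, zero_mul]
  have hτ0 : ∀ c, τ c = 0 := by
    intro c
    rw [hx' c, hSx, mul_zero]
  -- Step 3: now g_{ab}χ_c + g_{ac}χ_b + g_{bc}χ_a = 0
  have h4 : ∀ a b c, g a b * χ c + g a c * χ b + g b c * χ a = 0 := by
    intro a b c
    have h1 := heq2 a b c
    have h2 := hτ0 c
    simp only [hτdef] at h2
    have : σ' c = χ c := by linarith
    rw [this] at h1
    linear_combination h1
  have hx2 : ∀ c, χ c + 2 * ((∑ a, g a c * x a) * (∑ b, x b * χ b)) = 0 := by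
    intro c
    have := sum_contract2 g χ x h4 c
    rwa [hxx, one_mul] at this
  have hS : (∑ b, x b * χ b) = 0 := by
    have key : (∑ c, x c * χ c)
        = -2 * ((∑ c, ∑ a, g a c * x a * x c) * (∑ b, x b * χ b)) := by
      calc (∑ c, x c * χ c)
          = ∑ c, (-2 * ((∑ a, g a c * x a * x c) * (∑ b, x b * χ b))) := by
            refine Finset.sum_congr rfl fun c _ => ?_
            have h := hx2 c
            have hc : χ c = -2 * ((∑ a, g a c * x a) * (∑ b, x b * χ b)) := by
              linarith
            have hm : (∑ a, g a c * x a * x c) = (∑ a, g a c * x a) * x c :=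
              (Finset.sum_mul _ _ _).symm
            rw [hm]
            calc x c * χ c = x c * (-2 * ((∑ a, g a c * x a) * (∑ b, x b * χ b))) := by
                  rw [← hc]
              _ = -2 * ((∑ a, g a c * x a) * x c * (∑ b, x b * χ b)) := by ring
        _ = -2 * ((∑ c, ∑ a, g a c * x a * x c) * (∑ b, x b * χ b)) := by
            rw [Finset.sum_mul, Finset.mul_sum]
    have hipxx : (∑ c, ∑ a, g a c * x a * x c) = 1 := by
      rw [← hxx, ip, Finset.sum_comm]
    rw [hipxx, one_mul] at key
    linarith
  funext c
  have := hx2 c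
  rw [hS, mul_zero, mul_zero, add_zero] at this
  simpa using this
end

section
/- Let V be a 4-dimensional real vector space with Lorentz metric and null tetrad (l,n,x,y), and let S_{ab} = α g_{ab} + β l_a l_b for scalars α, β. Suppose a covector ψ, a 2-form G with G_{ab}l^b = γ l_a, scalars and covectors as follows satisfy the contracted curvature relation G_{da}ψ^d l_c = l_a α_c − (α_b l^b) g_{ac} − (β_b l^b + 2β p_b l^b) l_a l_c for covectors α_c, β_c, p_c. Then contracting with x^a x^c gives α_b l^b = 0, and subsequently α_c is proportional to l_c. -/
open scoped BigOperators
open Matrix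

/-- from the contracted curvature relation
`G_{da}ψ^d l_c = l_a α_c − (α_b l^b) g_{ac} − (β_b l^b + 2β p_b l^b) l_a l_c`
one deduces `α_b l^b = 0` and that `α_c` is proportional to `l_c`. Here `l_a`
denotes the lowered covector `g_{ab} l^b`. -/
theorem alpha_proportional_to_l
    (g : Matrix (Fin 4) (Fin 4) ℝ) (hg : IsLorentzMetric g)
    (l n x y : Fin 4 → ℝ) (htet : IsNullTetrad g l n x y)
    (ψ : Fin 4 → ℝ) (G : Matrix (Fin 4) (Fin 4) ℝ) (hG : ∀ a b, G a b = - G b a)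
    (γ β : ℝ) (αc βc pc : Fin 4 → ℝ)
    (hGl : ∀ a, (∑ b, G a b * l b) = γ * ∑ c, g a c * l c)
    (heq : ∀ a c, (∑ d, G d a * ψ d) * (∑ e, g c e * l e) =
      (∑ e, g a e * l e) * αc c - (∑ b, αc b * l b) * g a c -
      ((∑ b, βc b * l b) + 2 * β * ∑ b, pc b * l b) *
        (∑ e, g a e * l e) * (∑ e, g c e * l e)) :
    (∑ b, αc b * l b) = 0 ∧ ∃ μ : ℝ, ∀ c, αc c = μ * ∑ e, g c e * l e := by
  obtain ⟨gsym, -⟩ := hg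
  obtain ⟨hll, hnn, hln, hxx, hyy, hlx, hly, hnx, hny, hxy⟩ := htet
  have hlow : ∀ u : Fin 4 → ℝ, (∑ a, u a * ∑ e, g a e * l e) = ip g l u := by
    intro u
    unfold ip
    rw [Finset.sum_comm]
    refine Finset.sum_congr rfl fun a _ => ?_
    rw [Finset.mul_sum]
    exact Finset.sum_congr rfl fun b _ => by rw [gsym a b]; ring
  have hxL : (∑ a, x a * ∑ e, g a e * l e) = 0 := by rw [hlow]; exact hlx
  have hnL : (∑ a, n a * ∑ e, g a e * l e) = 1 := by rw [hlow]; exact hln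
  have hxgx : (∑ a, ∑ c, x a * x c * g a c) = 1 := by
    rw [← hxx]
    unfold ip
    exact Finset.sum_congr rfl fun a _ => Finset.sum_congr rfl fun b _ => by ring
  have h := heq
  simp only [Fin.sum_univ_four] at h hxL hnL hxgx
  have h1 : (∑ b, αc b * l b) = 0 := by
    simp only [Fin.sum_univ_four]
    linear_combination (x 0 * x 0) * h 0 0 + (x 0 * x 1) * h 0 1 + (x 0 * x 2) * h 0 2 + (x 0 * x 3) * h 0 3 + (x 1 * x 0) * h 1 0 + (x 1 * x 1) * h 1 1 + (x 1 * x 2) * h 1 2 + (x 1 * x 3) * h 1 3 + (x 2 * x 0) * h 2 0 + (x 2 * x 1) * h 2 1 + (x 2 * x 2) * h 2 2 + (x 2 * x 3) * h 2 3 + (x 3 * x 0) * h 3 0 + (x 3 * x 1) * h 3 1 + (x 3 * x 2) * h 3 2 + (x 3 * x 3) * h 3 3 + ((x 0 * αc 0 + x 1 * αc 1 + x 2 * αc 2 + x 3 * αc 3) - ((βc 0 * l 0 + βc 1 * l 1 + βc 2 * l 2 + βc 3 * l 3) + 2 * β * (pc 0 * l 0 + pc 1 * l 1 + pc 2 * l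 2 + pc 3 * l 3)) * (x 0 * (g 0 0 * l 0 + g 0 1 * l 1 + g 0 2 * l 2 + g 0 3 * l 3) + x 1 * (g 1 0 * l 0 + g 1 1 * l 1 + g 1 2 * l 2 + g 1 3 * l 3) + x 2 * (g 2 0 * l 0 + g 2 1 * l 1 + g 2 2 * l 2 + g 2 3 * l 3) + x 3 * (g 3 0 * l 0 + g 3 1 * l 1 + g 3 2 * l 2 + g 3 3 * l 3)) - (x 0 * (G 0 0 * ψ 0 + G 1 0 * ψ 1 + G 2 0 * ψ 2 + G 3 0 * ψ 3) + x 1 * (G 0 1 * ψ 0 + G 1 1 * ψ 1 + G 2 1 * ψ 2 + G 3 1 * ψ 3) + x 2 * (G 0 2 * ψ 0 + G 1 2 * ψ 1 + G 2 2 * ψ 2 + G 3 2 * ψ 3) + x 3 * (G 0 3 * ψ 0 + G 1 3 * ψ 1 + G 2 3 * ψ 2 + G 3 3 * ψ 3))) * hxL + (-(αc 0 * l 0 + αc 1 * l 1 + αc 2 * l 2 + αc 3 * l 3)) * hxgx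
  refine ⟨h1, (∑ a, n a * (∑ d, G d a * ψ d)) +
      ((∑ b, βc b * l b) + 2 * β * ∑ b, pc b * l b), fun c => ?_⟩
  simp only [Fin.sum_univ_four] at h1 ⊢
  linear_combination (-(n 0)) * h 0 c + (-(n 1)) * h 1 c + (-(n 2)) * h 2 c + (-(n 3)) * h 3 c + (((βc 0 * l 0 + βc 1 * l 1 + βc 2 * l 2 + βc 3 * l 3) + 2 * β * (pc 0 * l 0 + pc 1 * l 1 + pc 2 * l 2 + pc 3 * l 3)) * (g c 0 * l 0 + g c 1 * l 1 + g c 2 * l 2 + g c 3 * l 3) - αc c) * hnL + (n 0 * g 0 c + n 1 * g 1 c + n 2 * g 2 c + n 3 * g 3 c) * h1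
end
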